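/- arXiv:1104.1906 — 5 statements merged into one kernel-verified Lean document; each statement's English description precedes it below -/
import Mathlib

section
/- Let g_1,…,g_r be polynomials with integer coefficients and let m = lcm(m_1,…,m_r). Then (1/m)·Σ_{k=1}^{m} c_{m_1}(g_1(k))···c_{m_r}(g_r(k)) = Σ_{d_1|m_1,…,d_r|m_r} [d_1 μ(m_1/d_1)···d_r μ(m_r/d_r) / lcm(d_1,…,d_r)] · N_G(d_1,…,d_r), where N_G(d_1,…,d_r) is the number of x mod lcm(d_1,…,d_r) with g_i(x) ≡ 0 (mod d_i) for all i. -/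
/-!
Expanding each Ramanujan sum over the divisors of its modulus, `c_n(k) = ∑_{e ∣ n, e ∣ k} e μ(n/e)`,
turns the product `∏ᵢ c_{mᵢ}(gᵢ(k))` into a sum over tuples `d` with `dᵢ ∣ mᵢ` of
`∏ᵢ dᵢ μ(mᵢ/dᵢ)` times the indicator of `dᵢ ∣ gᵢ(k)` for all `i`. Since `x ↦ gᵢ(x) mod dᵢ` has
period `dᵢ`, that indicator has period `L = lcm(d₁,…,d_r)`, which divides `m`; so among
`k = 1,…,m` it holds exactly `(m / L) · N_G(d)` times.
-/

open Finset ArithmeticFunction Function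
open scoped ArithmeticFunction.Moebius

/-- The Ramanujan sum `c_n(k) = ∑_{d ∣ gcd(k,n)} d · μ(n/d)`, for integer `k`. -/
def ramanujanSum (n : ℕ) (k : ℤ) : ℤ :=
  ∑ d ∈ (Int.gcd k n).divisors, (d : ℤ) * moebius (n / d)

/-- `N_G(d₁,…,d_r)`: the number of `x` mod `lcm(d₁,…,d_r)` with `gᵢ(x) ≡ 0 (mod dᵢ)` for all `i`. -/
def NG {r : ℕ} (g : Fin r → Polynomial ℤ) (d : Fin r → ℕ) : ℕ :=
  ((Finset.range (Finset.univ.lcm d)).filter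
    (fun x : ℕ => ∀ i, (d i : ℤ) ∣ (g i).eval (x : ℤ))).card

theorem ramanujanSum_eq_sum_divisors (n : ℕ) (k : ℤ) :
    ramanujanSum n k = ∑ e ∈ n.divisors, if (e : ℤ) ∣ k then (e : ℤ) * μ (n / e) else 0 := by
  rcases eq_or_ne n 0 with rfl | hn
  · simp [ramanujanSum]
  have hdiv : (Int.gcd k n).divisors = n.divisors.filter fun e : ℕ => (e : ℤ) ∣ k := by
    ext e
    simp only [Nat.mem_divisors, mem_filter, Int.gcd, Int.natAbs_natCast, Nat.dvd_gcd_iff,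
      Int.natCast_dvd, ne_eq, Nat.gcd_eq_zero_iff, hn, and_false, not_false_eq_true, and_true]
    tauto
  rw [ramanujanSum, hdiv, sum_filter]

-- Stated over `Fin r` rather than a general `Fintype` so that the `Decidable (∀ i, _)` instance
-- in the statement is the one synthesized for `Fin r`, which `sum_filter` must match below.
theorem prod_ramanujanSum_eq_sum_piFinset {r : ℕ} {R : Type*} [CommRing R]
    (m : Fin r → ℕ) (a : Fin r → ℤ) :
    ∏ i, (ramanujanSum (m i) (a i) : R) =
      ∑ d ∈ Fintype.piFinset (fun i => (m i).divisors),
        if ∀ i, (d i : ℤ) ∣ a i then ∏ i, (d i : R) * μ (m i / d i) else 0 := by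
  simp_rw [ramanujanSum_eq_sum_divisors, Int.cast_sum, apply_ite (Int.cast : ℤ → R), Int.cast_mul,
    Int.cast_natCast, Int.cast_zero, prod_univ_sum, prod_ite_zero, mem_univ, true_implies]

theorem Polynomial.periodic_dvd_eval (f : Polynomial ℤ) {d L : ℕ} (hdL : d ∣ L) :
    Periodic (fun x : ℕ => (d : ℤ) ∣ f.eval (x : ℤ)) L := by
  intro x
  have hdiff : (d : ℤ) ∣ f.eval ((x + L : ℕ) : ℤ) - f.eval (x : ℤ) :=
    (Int.natCast_dvd_natCast.mpr hdL).trans (by simpa using f.sub_dvd_eval_sub ((x + L : ℕ) : ℤ) x)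
  exact propext (dvd_iff_dvd_of_dvd_sub hdiff)

theorem Function.Periodic.count_mul {p : ℕ → Prop} [DecidablePred p] {a : ℕ}
    (hp : Periodic p a) (q : ℕ) : Nat.count p (q * a) = q * Nat.count p a := by
  induction q with
  | zero => simp
  | succ q ih =>
    have hshift : ∀ k, p (k + a) = p k := hp
    rw [add_mul, one_mul, Nat.count_add']
    simp only [hshift, ih, add_mul, one_mul]

theorem card_filter_Icc_mul_lcm {r : ℕ} (g : Fin r → Polynomial ℤ) (d : Fin r → ℕ) {M : ℕ}
    (hdM : ∀ i, d i ∣ M) :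
    #((Icc 1 M).filter fun k : ℕ => ∀ i, (d i : ℤ) ∣ (g i).eval (k : ℤ)) * univ.lcm d =
      M * NG g d := by
  set L := univ.lcm d
  obtain ⟨q, rfl⟩ : L ∣ M := lcm_dvd fun i _ => hdM i
  have hper : Periodic (fun x : ℕ => ∀ i, (d i : ℤ) ∣ (g i).eval (x : ℤ)) L := fun x =>
    propext <| forall_congr' fun i =>
      eq_iff_iff.mp ((g i).periodic_dvd_eval (dvd_lcm (mem_univ i)) x)
  rw [← Ico_add_one_right_eq_Icc, add_comm, Nat.filter_Ico_card_eq_of_periodic _ _ _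
    (by simpa [mul_comm] using hper.nat_mul q), mul_comm L q, hper.count_mul,
    Nat.count_eq_card_filter_range, NG]
  ring

theorem eval_E_G_general {r : ℕ} (g : Fin r → Polynomial ℤ) (m : Fin r → ℕ) :
    (1 / ((Finset.univ.lcm m : ℕ) : ℚ)) *
      ∑ k ∈ Icc 1 (Finset.univ.lcm m),
        ∏ i, (ramanujanSum (m i) ((g i).eval (k : ℤ)) : ℚ) =
    ∑ d ∈ Fintype.piFinset (fun i => (m i).divisors),
      (∏ i, (d i : ℚ) * (moebius (m i / d i) : ℚ)) / ((Finset.univ.lcm d : ℕ) : ℚ) *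
        (NG g d : ℚ) := by
  simp_rw [prod_ramanujanSum_eq_sum_piFinset]
  rw [sum_comm, mul_sum]
  refine sum_congr rfl fun d hd => ?_
  have hdm : ∀ i, d i ∣ m i ∧ m i ≠ 0 := fun i => Nat.mem_divisors.mp (Fintype.mem_piFinset.mp hd i)
  have hdM : ∀ i, d i ∣ univ.lcm m := fun i => (hdm i).1.trans (dvd_lcm (mem_univ i))
  have hM : univ.lcm m ≠ 0 := by simpa [Finset.lcm_eq_zero_iff] using fun i => (hdm i).2
  have hL : univ.lcm d ≠ 0 := ne_zero_of_dvd_ne_zero hM (lcm_dvd fun i _ => hdM i)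
  have hcount := congrArg (Nat.cast : ℕ → ℚ) (card_filter_Icc_mul_lcm g d hdM)
  push_cast at hcount
  rw [← sum_filter, sum_const, nsmul_eq_mul]
  field_simp
  linear_combination (∏ i, (d i : ℚ) * μ (m i / d i)) * hcount

theorem eval_E_G {r : ℕ} (g : Fin r → Polynomial ℤ) (m : Fin r → ℕ)
    (hm : ∀ i, 0 < m i) :
    (1 / ((Finset.univ.lcm m : ℕ) : ℚ)) *
      ∑ k ∈ Icc 1 (Finset.univ.lcm m),
        ∏ i, (ramanujanSum (m i) ((g i).eval (k : ℤ)) : ℚ) =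
    ∑ d ∈ Fintype.piFinset (fun i => (m i).divisors),
      (∏ i, (d i : ℚ) * (moebius (m i / d i) : ℚ)) / ((Finset.univ.lcm d : ℕ) : ℚ) *
        (NG g d : ℚ) :=
  eval_E_G_general g m
end

section
/- For any system G of integer polynomials, the function R_G(m_1,…,m_r) := Σ_{1 ≤ k ≤ m, gcd(k,m)=1} c_{m_1}(g_1(k))···c_{m_r}(g_r(k)), where m = lcm(m_1,…,m_r), is multiplicative in (m_1,…,m_r). -/
/-!
The Ramanujan sum `c_n(k) = ∑_{d ∣ n, d ∣ k} d μ(n/d)` is, as a function of `n`, the Dirichlet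
convolution of `μ` with the multiplicative function `d ↦ d · [d ∣ k]`; hence
`c_{ab} = c_a c_b` for coprime `a, b`. It also depends only on `gcd(k, n)`, so `c_n(g(k))`
is periodic in `k` with any period divisible by `n`. With `M = lcm mᵢ` and `N = lcm nᵢ`
coprime, `lcm (mᵢ nᵢ) = M N` and the summand of `R_G(mn)` at `k` is the product of an
`M`-periodic and an `N`-periodic function, namely the summands of `R_G(m)` and `R_G(n)`.
By the Chinese remainder theorem the reduced residues mod `M N` are the pairs of reduced
residues mod `M` and mod `N`, so the sum factors.
-/

open Finset ArithmeticFunction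

/-- `R_G(m₁,…,m_r) = ∑_{1 ≤ k ≤ lcm, gcd(k,lcm)=1} ∏ᵢ c_{mᵢ}(gᵢ(k))`. -/
def RG {r : ℕ} (g : Fin r → Polynomial ℤ) (m : Fin r → ℕ) : ℤ :=
  ∑ k ∈ (Icc 1 (Finset.univ.lcm m)).filter
      (fun k => Nat.gcd k (Finset.univ.lcm m) = 1),
    ∏ i, ramanujanSum (m i) ((g i).eval (k : ℤ))

open Function Polynomial

theorem Function.Periodic.map_val_natCast {α : Type*} {M : ℕ} {f : ℕ → α} (hf : Periodic f M)
    (a : ℕ) : f (a : ZMod M).val = f a := by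
  rw [ZMod.val_natCast, hf.map_mod_nat]

theorem ZMod.chineseRemainder_apply_of_ne_zero {M N : ℕ} [NeZero M] [NeZero N]
    (hMN : M.Coprime N) (x : ZMod (M * N)) :
    ZMod.chineseRemainder hMN x = ((x.val : ZMod M), (x.val : ZMod N)) := by
  change ZMod.castHom (by simp [Nat.lcm_dvd_iff]) (ZMod M × ZMod N) x = _
  rw [ZMod.castHom_apply, ZMod.cast_eq_val]
  rfl

theorem Finset.lcm_mul_of_coprime {ι : Type*} (s : Finset ι) {f g : ι → ℕ}
    (h : (s.lcm f).Coprime (s.lcm g)) :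
    s.lcm (fun i => f i * g i) = s.lcm f * s.lcm g :=
  Nat.dvd_antisymm (Finset.lcm_dvd fun _ hi => mul_dvd_mul (dvd_lcm hi) (dvd_lcm hi))
    (h.mul_dvd_of_dvd_of_dvd
      (Finset.lcm_dvd fun _ hi => (dvd_mul_right _ _).trans (dvd_lcm hi))
      (Finset.lcm_dvd fun _ hi => (dvd_mul_left _ _).trans (dvd_lcm hi)))

theorem sum_filter_coprime_Icc_eq_sum_units {R : Type*} [AddCommMonoid R] {L : ℕ} [NeZero L]
    {f : ℕ → R} (hf : Periodic f L) :
    ∑ k ∈ (Icc 1 L).filter (fun k => Nat.gcd k L = 1), f k =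
      ∑ u : (ZMod L)ˣ, f (u : ZMod L).val := by
  -- `(u - 1).val + 1` is the representative of `u` in `[1, L]`, whereas `u.val` lies in `[0, L)`.
  refine Finset.sum_bij' (fun k hk => ZMod.unitOfCoprime k (mem_filter.1 hk).2)
    (fun u _ => ((u : ZMod L) - 1).val + 1) (fun _ _ => mem_univ _) ?_ ?_ ?_ ?_
  · intro u _
    have hcast : (((u : ZMod L) - 1).val + 1 : ℕ) = (u : ZMod L) := by simp
    refine mem_filter.2 ⟨mem_Icc.2 ⟨le_add_self, ZMod.val_lt _⟩, ?_⟩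
    exact (ZMod.isUnit_iff_coprime _ L).1 (by rw [hcast]; exact u.isUnit)
  · intro k hk
    obtain ⟨⟨hk1, hkL⟩, -⟩ := by simpa only [mem_filter, mem_Icc] using hk
    have hpred : (k : ZMod L) - 1 = ((k - 1 : ℕ) : ZMod L) := by rw [Nat.cast_sub hk1]; simp
    simp only [ZMod.coe_unitOfCoprime, hpred, ZMod.val_natCast_of_lt (by omega : k - 1 < L)]
    omega
  · intro u _
    ext
    simp
  · intro k _
    rw [ZMod.coe_unitOfCoprime, hf.map_val_natCast]

theorem sum_units_mul_of_coprime {R : Type*} [Semiring R] {M N : ℕ} [NeZero M] [NeZero N]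
    (hMN : M.Coprime N) {f g : ℕ → R} (hf : Periodic f M) (hg : Periodic g N) :
    ∑ u : (ZMod (M * N))ˣ, f (u : ZMod (M * N)).val * g (u : ZMod (M * N)).val =
      (∑ u : (ZMod M)ˣ, f (u : ZMod M).val) * ∑ u : (ZMod N)ˣ, g (u : ZMod N).val := by
  let e : (ZMod (M * N))ˣ ≃ (ZMod M)ˣ × (ZMod N)ˣ :=
    (Units.mapEquiv (ZMod.chineseRemainder hMN).toMulEquiv).trans MulEquiv.prodUnits
  rw [sum_mul_sum, ← Fintype.sum_prod_type', ← e.sum_comp]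
  refine Fintype.sum_congr _ _ fun u => ?_
  change _ = f (ZMod.chineseRemainder hMN u).1.val * g (ZMod.chineseRemainder hMN u).2.val
  rw [ZMod.chineseRemainder_apply_of_ne_zero, hf.map_val_natCast, hg.map_val_natCast]

theorem sum_filter_coprime_Icc_mul {R : Type*} [Semiring R] {M N : ℕ} (hMN : M.Coprime N)
    {f g : ℕ → R} (hf : Periodic f M) (hg : Periodic g N) :
    ∑ k ∈ (Icc 1 (M * N)).filter (fun k => Nat.gcd k (M * N) = 1), f k * g k =
      (∑ k ∈ (Icc 1 M).filter (fun k => Nat.gcd k M = 1), f k) *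
        ∑ k ∈ (Icc 1 N).filter (fun k => Nat.gcd k N = 1), g k := by
  rcases eq_or_ne M 0 with rfl | hM
  · simp
  rcases eq_or_ne N 0 with rfl | hN
  · simp
  have := NeZero.mk hM
  have := NeZero.mk hN
  have hfMN : Periodic f (M * N) := by simpa only [Nat.cast_id, mul_comm N M] using hf.nat_mul N
  have hgMN : Periodic g (M * N) := by simpa only [Nat.cast_id] using hg.nat_mul M
  rw [sum_filter_coprime_Icc_eq_sum_units (f := fun k => f k * g k) (hfMN.mul hgMN),
    sum_filter_coprime_Icc_eq_sum_units hf, sum_filter_coprime_Icc_eq_sum_units hg,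
    sum_units_mul_of_coprime hMN hf hg]

def idOnDivisors (k : ℤ) : ArithmeticFunction ℤ :=
  ⟨fun d => if (d : ℤ) ∣ k then d else 0, by simp⟩

theorem idOnDivisors_apply (k : ℤ) (d : ℕ) :
    idOnDivisors k d = if (d : ℤ) ∣ k then (d : ℤ) else 0 :=
  rfl

theorem isMultiplicative_idOnDivisors (k : ℤ) : (idOnDivisors k).IsMultiplicative := by
  refine ⟨by simp [idOnDivisors_apply], fun {p q} hpq => ?_⟩
  have hdvd : ((p * q : ℕ) : ℤ) ∣ k ↔ (p : ℤ) ∣ k ∧ (q : ℤ) ∣ k := by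
    push_cast
    refine ⟨fun h => ⟨(dvd_mul_right _ _).trans h, (dvd_mul_left _ _).trans h⟩, fun ⟨hp, hq⟩ => ?_⟩
    exact (Nat.isCoprime_iff_coprime.2 hpq).mul_dvd hp hq
  simp only [idOnDivisors_apply, hdvd]
  split_ifs <;> simp_all

theorem ramanujanSum_eq_idOnDivisors_mul_moebius (n : ℕ) (k : ℤ) :
    ramanujanSum n k = (idOnDivisors k * moebius) n := by
  rcases eq_or_ne n 0 with rfl | hn
  · simp [ramanujanSum]
  have hgcd : Int.gcd k n ∣ n := by simpa using Int.gcd_dvd_natAbs_right k n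
  rw [mul_apply, Nat.sum_divisorsAntidiagonal (fun a b => idOnDivisors k a * moebius b),
    ramanujanSum, ← Nat.divisors_filter_dvd_of_dvd hn hgcd, sum_filter]
  refine sum_congr rfl fun d hd => ?_
  have hdn : (d : ℤ) ∣ n := Int.natCast_dvd_natCast.2 (Nat.dvd_of_mem_divisors hd)
  simp only [idOnDivisors_apply, Int.dvd_gcd_iff, hdn, and_true]
  split_ifs <;> simp

theorem ramanujanSum_mul {a b : ℕ} (hab : a.Coprime b) (k : ℤ) :
    ramanujanSum (a * b) k = ramanujanSum a k * ramanujanSum b k := by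
  simp only [ramanujanSum_eq_idOnDivisors_mul_moebius,
    ((isMultiplicative_idOnDivisors k).mul isMultiplicative_moebius).map_mul_of_coprime hab]

theorem ramanujanSum_add_mul (n : ℕ) (k t : ℤ) :
    ramanujanSum n (k + n * t) = ramanujanSum n k := by
  rw [ramanujanSum, ramanujanSum, Int.gcd_add_mul_left_left]

theorem periodic_ramanujanSum_eval (p : ℤ[X]) {n M : ℕ} (h : n ∣ M) :
    Periodic (fun k : ℕ => ramanujanSum n (p.eval (k : ℤ))) M := by
  intro k
  obtain ⟨t, ht⟩ : (n : ℤ) ∣ p.eval ((k + M : ℕ) : ℤ) - p.eval (k : ℤ) :=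
    (Int.natCast_dvd_natCast.2 h).trans (by simpa using sub_dvd_eval_sub ((k + M : ℕ) : ℤ) k p)
  simp only [eq_add_of_sub_eq ht, add_comm _ (p.eval (k : ℤ)), ramanujanSum_add_mul]

theorem periodic_prod_ramanujanSum_eval {ι : Type*} [Fintype ι] (g : ι → ℤ[X]) (m : ι → ℕ) :
    Periodic (fun k : ℕ => ∏ i, ramanujanSum (m i) ((g i).eval (k : ℤ))) (univ.lcm m) :=
  fun k => prod_congr rfl fun i hi => periodic_ramanujanSum_eval (g i) (dvd_lcm hi) k

theorem RG_multiplicative_general {r : ℕ} (g : Fin r → Polynomial ℤ)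
    (m n : Fin r → ℕ)
    (h : Nat.Coprime (∏ i, m i) (∏ i, n i)) :
    RG g (fun i => m i * n i) = RG g m * RG g n := by
  have hlcm : (univ.lcm m).Coprime (univ.lcm n) :=
    (h.coprime_dvd_left (lcm_dvd_prod _ _)).coprime_dvd_right (lcm_dvd_prod _ _)
  have hcop (i : Fin r) : (m i).Coprime (n i) :=
    (h.coprime_dvd_left (dvd_prod_of_mem m (mem_univ i))).coprime_dvd_right
      (dvd_prod_of_mem n (mem_univ i))
  rw [RG, RG, RG, univ.lcm_mul_of_coprime hlcm, ← sum_filter_coprime_Icc_mul hlcm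
    (periodic_prod_ramanujanSum_eval g m) (periodic_prod_ramanujanSum_eval g n)]
  refine sum_congr rfl fun k _ => ?_
  rw [← prod_mul_distrib]
  exact prod_congr rfl fun i _ => ramanujanSum_mul (hcop i) _

theorem RG_multiplicative {r : ℕ} (g : Fin r → Polynomial ℤ)
    (m n : Fin r → ℕ) (hm : ∀ i, 0 < m i) (hn : ∀ i, 0 < n i)
    (h : Nat.Coprime (∏ i, m i) (∏ i, n i)) :
    RG g (fun i => m i * n i) = RG g m * RG g n :=
  RG_multiplicative_general g m n h
end

section
/- Let m_1, m_2 be positive integers, m = lcm(m_1,m_2), and a_1, a_2 ∈ ℤ with gcd(a_1,m_1) = gcd(a_2,m_2) = 1 and |a_1 − a_2| = 1. Then Σ_{1 ≤ k ≤ m, gcd(k,m)=1} c_{m_1}(k−a_1) c_{m_2}(k−a_2) = (−1)^{ω(gcd(m_1,m_2))} ψ(gcd(m_1,m_2)) if both m_1 and m_2 are squarefree, and 0 otherwise, where ψ(n) = n·∏_{p|n}(1+1/p) is the Dedekind psi function. -/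
/-!
Expanding both Ramanujan sums over divisors `d₁ ∣ m₁`, `d₂ ∣ m₂` turns the sum into counts of
reduced residues `k` mod `m` with `k ≡ a₁ (mod d₁)` and `k ≡ a₂ (mod d₂)`. As `a₁ - a₂ = ±1`,
such `k` exist only if `d₁` and `d₂` are coprime, and then, by the Chinese remainder theorem, they
form a fibre of the surjection `(ℤ/m)ˣ → (ℤ/d₁d₂)ˣ`, of size `φ(m) / (φ(d₁) φ(d₂))`. So the sum is
`φ(m) ∑_{gcd(d₁,d₂)=1} μ(m₁/d₁) μ(m₂/d₂) d₁ d₂ / (φ(d₁) φ(d₂))`. This expression and the claimed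
value both split over coprime factorizations of the pair `(m₁, m₂)`, so it suffices to compare them
at `(p^a, p^b)`. For `a ≥ 2` only `d₁ = p^a` and `d₁ = p^(a-1)` have `μ(p^a/d₁) ≠ 0`, and their
terms cancel because `d / φ(d)` and coprimality to `d₂` depend only on the prime factors of `d`;
the cases `a, b ≤ 1` are a direct computation.
-/

open Finset ArithmeticFunction

open scoped ArithmeticFunction.Moebius Nat

theorem MonoidHom.card_fiber_mul_card_of_surjective {G H : Type*} [Group G] [Monoid H]
    [Fintype G] [Fintype H] [DecidableEq H] (f : G →* H) (hf : Function.Surjective f) (y : H) :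
    #{g | f g = y} * Fintype.card H = Fintype.card G := by
  have hfiber (z : H) : #{g | f g = z} = #{g | f g = y} :=
    MonoidHom.card_fiber_eq_of_mem_range f (hf z) (hf y)
  calc #{g | f g = y} * Fintype.card H = ∑ z : H, #{g | f g = z} := by
        simp [hfiber, mul_comm]
    _ = Fintype.card G :=
        (card_eq_sum_card_fiberwise (t := univ) fun _ _ => mem_coe.2 (mem_univ _)).symm

theorem Nat.Coprime.of_dvd_sub_of_dvd_sub {d₁ d₂ : ℕ} {k a₁ a₂ : ℤ} (h₁ : (d₁ : ℤ) ∣ k - a₁)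
    (h₂ : (d₂ : ℤ) ∣ k - a₂) (ha : IsUnit (a₁ - a₂)) : d₁.Coprime d₂ := by
  obtain ⟨x, hx⟩ := h₁
  obtain ⟨y, hy⟩ := h₂
  obtain ⟨u, hu⟩ := ha
  refine Nat.isCoprime_iff_coprime.1 ⟨-x * ↑u⁻¹, y * ↑u⁻¹, ?_⟩
  linear_combination (↑u⁻¹ : ℤ) * (hx - hy - hu) + u.inv_mul

section CoprimePairs

variable {m₁ m₂ n₁ n₂ : ℕ}

theorem Nat.Coprime.gcd_mul_mul (h : (m₁ * m₂).Coprime (n₁ * n₂)) :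
    (m₁ * n₁).gcd (m₂ * n₂) = m₁.gcd m₂ * n₁.gcd n₂ := by
  simp only [Nat.coprime_mul_iff_left, Nat.coprime_mul_iff_right] at h
  obtain ⟨⟨-, h₂₁⟩, h₁₂, h₂₂⟩ := h
  rw [Nat.Coprime.gcd_mul _ h₂₂, Nat.Coprime.gcd_mul_right_cancel _ h₂₁.symm,
    Nat.Coprime.gcd_mul_left_cancel _ h₁₂]

theorem Nat.Coprime.lcm_mul_mul (h : (m₁ * m₂).Coprime (n₁ * n₂)) :
    (m₁ * n₁).lcm (m₂ * n₂) = m₁.lcm m₂ * n₁.lcm n₂ := by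
  have hm : m₁.Coprime n₁ :=
    (h.coprime_dvd_left (Nat.dvd_mul_right _ _)).coprime_dvd_right (Nat.dvd_mul_right _ _)
  have hn : m₂.Coprime n₂ :=
    (h.coprime_dvd_left (Nat.dvd_mul_left _ _)).coprime_dvd_right (Nat.dvd_mul_left _ _)
  have hl : (m₁.lcm m₂).Coprime (n₁.lcm n₂) :=
    (h.coprime_dvd_left (Nat.lcm_dvd_mul _ _)).coprime_dvd_right (Nat.lcm_dvd_mul _ _)
  rw [← hm.lcm_eq_mul, ← hn.lcm_eq_mul, ← hl.lcm_eq_mul, Nat.lcm_assoc, Nat.lcm_assoc,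
    ← Nat.lcm_assoc n₁, Nat.lcm_comm n₁ m₂, Nat.lcm_assoc m₂]

end CoprimePairs

theorem Nat.Coprime.sum_divisors_mul_eq_sum_sum {M : Type*} [AddCommMonoid M] {m n : ℕ}
    (hmn : m.Coprime n) (f : ℕ → M) :
    ∑ d ∈ (m * n).divisors, f d = ∑ u ∈ m.divisors, ∑ v ∈ n.divisors, f (u * v) := by
  rw [hmn.divisors_mul, sum_map]
  exact (sum_attach _ fun p : ℕ × ℕ => f (p.1 * p.2)).trans (sum_product _ _ _)

theorem sum_divisors_prime_pow_moebius_div_mul_eq_zero {R : Type*} [CommRing R] {p a : ℕ}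
    (hp : p.Prime) (ha : 2 ≤ a) (g : ℕ → R) (hg : ∀ d, p ∣ d → g (p * d) = g d) :
    ∑ d ∈ (p ^ a).divisors, (μ (p ^ a / d) : R) * g d = 0 := by
  obtain ⟨c, rfl⟩ : ∃ c, a = c + 2 := ⟨a - 2, by omega⟩
  have hμ {i : ℕ} (hi : i ≤ c + 2) : μ (p ^ (c + 2) / p ^ i) = μ (p ^ (c + 2 - i)) := by
    rw [Nat.pow_div hi hp.pos]
  rw [Nat.sum_divisors_prime_pow hp, sum_range_succ, sum_range_succ, sum_eq_zero, hμ (by omega),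
    hμ le_rfl, show c + 2 - (c + 1) = 1 by omega, Nat.sub_self, pow_one, pow_zero,
    moebius_apply_prime hp, moebius_apply_one, pow_succ' p (c + 1),
    hg _ (dvd_pow_self p (by omega))]
  · push_cast
    ring
  · intro i hi
    have hi : i < c + 1 := mem_range.1 hi
    rw [hμ (by omega), moebius_apply_prime_pow hp (by omega), if_neg (by omega), Int.cast_zero,
      zero_mul]

def IsBimultiplicative {M : Type*} [Mul M] (F : ℕ → ℕ → M) : Prop :=
  ∀ ⦃m₁ m₂ n₁ n₂ : ℕ⦄, (m₁ * m₂).Coprime (n₁ * n₂) →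
    F (m₁ * n₁) (m₂ * n₂) = F m₁ m₂ * F n₁ n₂

namespace IsBimultiplicative

variable {M : Type*} {F G : ℕ → ℕ → M}

theorem mul [CommMonoid M] (hF : IsBimultiplicative F) (hG : IsBimultiplicative G) :
    IsBimultiplicative fun m₁ m₂ => F m₁ m₂ * G m₁ m₂ := by
  intro m₁ m₂ n₁ n₂ h
  change F _ _ * G _ _ = F _ _ * G _ _ * (F _ _ * G _ _)
  rw [hF h, hG h, mul_mul_mul_comm]

theorem eq_of_prime_pow [Mul M] (hF : IsBimultiplicative F) (hG : IsBimultiplicative G)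
    (h : ∀ p a b : ℕ, p.Prime → F (p ^ a) (p ^ b) = G (p ^ a) (p ^ b)) {m₁ m₂ : ℕ}
    (hm₁ : m₁ ≠ 0) (hm₂ : m₂ ≠ 0) : F m₁ m₂ = G m₁ m₂ := by
  suffices ∀ N, N ≠ 0 → ∀ m₁ m₂, m₁ ∣ N → m₂ ∣ N → F m₁ m₂ = G m₁ m₂ from
    this _ (mul_ne_zero hm₁ hm₂) m₁ m₂ (Nat.dvd_mul_right _ _) (Nat.dvd_mul_left _ _)
  intro N
  induction N using Nat.recOnPosPrimePosCoprime with
  | zero => exact fun h => absurd rfl h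
  | one =>
    intro _ m₁ m₂ h₁ h₂
    rw [Nat.dvd_one.1 h₁, Nat.dvd_one.1 h₂]
    simpa using h 2 0 0 Nat.prime_two
  | prime_pow p n hp _ =>
    intro _ m₁ m₂ h₁ h₂
    obtain ⟨a, -, rfl⟩ := (Nat.dvd_prime_pow hp).1 h₁
    obtain ⟨b, -, rfl⟩ := (Nat.dvd_prime_pow hp).1 h₂
    exact h p a b hp
  | coprime a b _ _ hab iha ihb =>
    intro hN m₁ m₂ h₁ h₂
    have hsplit {m : ℕ} (hm : m ∣ a * b) : m.gcd a * m.gcd b = m := by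
      rw [← Nat.Coprime.gcd_mul m hab, Nat.gcd_eq_left hm]
    have hab' : (a * a).Coprime (b * b) := (hab.mul_left hab).mul_right (hab.mul_left hab)
    have hcop : (m₁.gcd a * m₂.gcd a).Coprime (m₁.gcd b * m₂.gcd b) :=
      (hab'.coprime_dvd_left (mul_dvd_mul (Nat.gcd_dvd_right _ _) (Nat.gcd_dvd_right _ _))
        ).coprime_dvd_right (mul_dvd_mul (Nat.gcd_dvd_right _ _) (Nat.gcd_dvd_right _ _))
    rw [← hsplit h₁, ← hsplit h₂, hF hcop, hG hcop,
      iha (left_ne_zero_of_mul hN) _ _ (Nat.gcd_dvd_right _ _) (Nat.gcd_dvd_right _ _),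
      ihb (right_ne_zero_of_mul hN) _ _ (Nat.gcd_dvd_right _ _) (Nat.gcd_dvd_right _ _)]

end IsBimultiplicative

theorem ZMod.natCast_injOn_Icc (m : ℕ) : Set.InjOn (Nat.cast : ℕ → ZMod m) (Icc 1 m) := by
  intro k hk l hl hkl
  simp only [coe_Icc, Set.mem_Icc] at hk hl
  refine ((ZMod.natCast_eq_natCast_iff _ _ _).1 hkl).eq_of_abs_lt ?_
  rw [abs_sub_lt_iff]
  omega

theorem card_filter_Icc_coprime_eq_card_units {m : ℕ} [NeZero m] (P : ZMod m → Prop)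
    [DecidablePred P] :
    #{k ∈ Icc 1 m | k.gcd m = 1 ∧ P ((k : ℕ) : ZMod m)} = #{u : (ZMod m)ˣ | P u} := by
  refine card_bij (fun k hk => ZMod.unitOfCoprime k (mem_filter.1 hk).2.1) ?_ ?_ ?_
  · intro k hk
    simpa [ZMod.coe_unitOfCoprime] using (mem_filter.1 hk).2.2
  · intro k hk l hl hkl
    refine ZMod.natCast_injOn_Icc m (mem_filter.1 hk).1 (mem_filter.1 hl).1 ?_
    simpa [ZMod.coe_unitOfCoprime] using congrArg Units.val hkl
  · intro u hu
    -- the shift by one puts the representative in `Icc 1 m` rather than `Ico 0 m`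
    set k := ((u : ZMod m) - 1).val + 1
    have hku : (k : ZMod m) = u := by simp [k]
    have hk : k.Coprime m := (ZMod.isUnit_iff_coprime k m).1 (hku ▸ u.isUnit)
    refine ⟨k, mem_filter.2 ⟨mem_Icc.2 ⟨by omega, ZMod.val_lt _⟩, hk, ?_⟩, Units.ext ?_⟩
    · simpa [hku] using (mem_filter.1 hu).2
    · simp [ZMod.coe_unitOfCoprime, hku]

theorem card_filter_Icc_coprime_natCast_eq_mul_totient {m d : ℕ} [NeZero m] (hd : d ∣ m)
    {x : ZMod d} (hx : IsUnit x) :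
    #{k ∈ Icc 1 m | k.gcd m = 1 ∧ ((k : ℕ) : ZMod d) = x} * φ d = φ m := by
  have : NeZero d := ⟨fun h => NeZero.ne m (Nat.eq_zero_of_zero_dvd (h ▸ hd))⟩
  have hfiber : #{k ∈ Icc 1 m | k.gcd m = 1 ∧ ((k : ℕ) : ZMod d) = x} =
      #{u : (ZMod m)ˣ | ZMod.unitsMap hd u = hx.unit} := by
    calc _ = #{u : (ZMod m)ˣ | ((u : ZMod m).cast : ZMod d) = x} := by
          simpa only [ZMod.cast_natCast hd] using
            card_filter_Icc_coprime_eq_card_units fun y : ZMod m => (y.cast : ZMod d) = x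
      _ = _ := by simp only [Units.ext_iff, ZMod.unitsMap_val, IsUnit.unit_spec]
  rw [hfiber, ← ZMod.card_units_eq_totient, ← ZMod.card_units_eq_totient]
  exact MonoidHom.card_fiber_mul_card_of_surjective _ (ZMod.unitsMap_surjective hd) _

theorem card_filter_Icc_coprime_dvd_sub_dvd_sub_mul {m d₁ d₂ : ℕ} [NeZero m] (hd₁ : d₁ ∣ m)
    (hd₂ : d₂ ∣ m) (hd : d₁.Coprime d₂) {a₁ a₂ : ℤ} (ha₁ : IsCoprime (d₁ : ℤ) a₁)
    (ha₂ : IsCoprime (d₂ : ℤ) a₂) :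
    #{k ∈ Icc 1 m | k.gcd m = 1 ∧ ((d₁ : ℤ) ∣ (k : ℕ) - a₁ ∧ (d₂ : ℤ) ∣ (k : ℕ) - a₂)} *
      (φ d₁ * φ d₂) = φ m := by
  let e := ZMod.chineseRemainder hd
  have hx : IsUnit (e.symm (a₁, a₂)) :=
    (Prod.isUnit_iff.2 ⟨(ZMod.coe_int_isUnit_iff_isCoprime _ _).2 ha₁,
      (ZMod.coe_int_isUnit_iff_isCoprime _ _).2 ha₂⟩).map e.symm
  have hcrt (k : ℕ) : ((d₁ : ℤ) ∣ k - a₁ ∧ (d₂ : ℤ) ∣ k - a₂) ↔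
      ((k : ℕ) : ZMod (d₁ * d₂)) = e.symm (a₁, a₂) := by
    rw [← e.injective.eq_iff, e.apply_symm_apply, map_natCast, Prod.ext_iff,
      ← ZMod.intCast_eq_intCast_iff_dvd_sub, ← ZMod.intCast_eq_intCast_iff_dvd_sub]
    simp only [Prod.fst_natCast, Prod.snd_natCast, Int.cast_natCast, eq_comm]
  simp_rw [hcrt, ← Nat.totient_mul hd]
  exact card_filter_Icc_coprime_natCast_eq_mul_totient (hd.mul_dvd_of_dvd_of_dvd hd₁ hd₂) hx

theorem natCast_card_filter_Icc_coprime_dvd_sub_dvd_sub {m d₁ d₂ : ℕ} [NeZero m] (hd₁ : d₁ ∣ m)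
    (hd₂ : d₂ ∣ m) {a₁ a₂ : ℤ} (ha₁ : IsCoprime (d₁ : ℤ) a₁) (ha₂ : IsCoprime (d₂ : ℤ) a₂)
    (ha : IsUnit (a₁ - a₂)) :
    (#{k ∈ Icc 1 m | k.gcd m = 1 ∧ ((d₁ : ℤ) ∣ (k : ℕ) - a₁ ∧ (d₂ : ℤ) ∣ (k : ℕ) - a₂)} : ℚ) =
      if d₁.Coprime d₂ then (φ m : ℚ) / (φ d₁ * φ d₂) else 0 := by
  split_ifs with hd
  · have hφ : (φ d₁ * φ d₂ : ℚ) ≠ 0 := by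
      have := NeZero.ne m
      simp only [ne_eq, mul_eq_zero, Nat.cast_eq_zero, Nat.totient_eq_zero, not_or]
      exact ⟨fun h => this (Nat.eq_zero_of_zero_dvd (h ▸ hd₁)),
        fun h => this (Nat.eq_zero_of_zero_dvd (h ▸ hd₂))⟩
    rw [eq_div_iff hφ]
    exact_mod_cast card_filter_Icc_coprime_dvd_sub_dvd_sub_mul hd₁ hd₂ hd ha₁ ha₂
  · rw [Nat.cast_eq_zero, card_eq_zero, filter_eq_empty_iff]
    rintro k - ⟨-, h₁, h₂⟩
    exact hd (.of_dvd_sub_of_dvd_sub h₁ h₂ ha)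

theorem ramanujanSum_eq_sum_divisors_dvd {n : ℕ} (hn : n ≠ 0) (k : ℤ) :
    ramanujanSum n k = ∑ d ∈ n.divisors, if (d : ℤ) ∣ k then (d : ℤ) * μ (n / d) else 0 := by
  rw [ramanujanSum, ← sum_filter]
  congr 1
  ext d
  have : Int.gcd k n ≠ 0 := by simp [hn]
  simp only [Nat.mem_divisors, ← Int.natCast_dvd_natCast, Int.coe_gcd, _root_.dvd_gcd_iff, ne_eq,
    this, hn, not_false_eq_true, and_true, mem_filter]
  exact and_comm

theorem sum_ramanujanSum_mul_ramanujanSum (s : Finset ℕ) {m₁ m₂ : ℕ} (hm₁ : m₁ ≠ 0)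
    (hm₂ : m₂ ≠ 0) (a₁ a₂ : ℤ) :
    ∑ k ∈ s, (ramanujanSum m₁ (k - a₁) : ℚ) * ramanujanSum m₂ (k - a₂) =
      ∑ d₁ ∈ m₁.divisors, ∑ d₂ ∈ m₂.divisors, (d₁ * μ (m₁ / d₁) * (d₂ * μ (m₂ / d₂)) : ℚ) *
        #{k ∈ s | (d₁ : ℤ) ∣ (k : ℕ) - a₁ ∧ (d₂ : ℤ) ∣ (k : ℕ) - a₂} := by
  simp_rw [ramanujanSum_eq_sum_divisors_dvd hm₁, ramanujanSum_eq_sum_divisors_dvd hm₂,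
    Int.cast_sum, sum_mul_sum, natCast_card_filter, mul_sum]
  rw [sum_comm]
  refine sum_congr rfl fun d₁ _ => ?_
  rw [sum_comm]
  refine sum_congr rfl fun d₂ _ => sum_congr rfl fun k _ => ?_
  split_ifs <;> simp_all

noncomputable def divisorWeight (n d : ℕ) : ℚ := μ (n / d) * (d / φ d)

noncomputable def coprimeDivisorSum (m₁ m₂ : ℕ) : ℚ :=
  ∑ d₁ ∈ m₁.divisors, ∑ d₂ ∈ m₂.divisors,
    if d₁.Coprime d₂ then divisorWeight m₁ d₁ * divisorWeight m₂ d₂ else 0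

theorem sum_coprime_ramanujanSum_mul_ramanujanSum {m₁ m₂ : ℕ} (hm₁ : m₁ ≠ 0) (hm₂ : m₂ ≠ 0)
    {a₁ a₂ : ℤ} (ha₁ : IsCoprime (m₁ : ℤ) a₁) (ha₂ : IsCoprime (m₂ : ℤ) a₂)
    (ha : IsUnit (a₁ - a₂)) :
    ∑ k ∈ Icc 1 (m₁.lcm m₂) with k.gcd (m₁.lcm m₂) = 1,
      (ramanujanSum m₁ (k - a₁) : ℚ) * ramanujanSum m₂ (k - a₂) =
      φ (m₁.lcm m₂) * coprimeDivisorSum m₁ m₂ := by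
  have : NeZero (m₁.lcm m₂) := ⟨Nat.lcm_ne_zero hm₁ hm₂⟩
  rw [sum_ramanujanSum_mul_ramanujanSum _ hm₁ hm₂, coprimeDivisorSum, mul_sum]
  refine sum_congr rfl fun d₁ hd₁ => ?_
  rw [mul_sum]
  refine sum_congr rfl fun d₂ hd₂ => ?_
  have hd₁ := (Nat.mem_divisors.1 hd₁).1
  have hd₂ := (Nat.mem_divisors.1 hd₂).1
  rw [filter_filter, natCast_card_filter_Icc_coprime_dvd_sub_dvd_sub
    (hd₁.trans (Nat.dvd_lcm_left _ _)) (hd₂.trans (Nat.dvd_lcm_right _ _))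
    (ha₁.of_isCoprime_of_dvd_left (Int.natCast_dvd_natCast.2 hd₁))
    (ha₂.of_isCoprime_of_dvd_left (Int.natCast_dvd_natCast.2 hd₂)) ha]
  split_ifs
  · rw [divisorWeight, divisorWeight]
    ring
  · simp

theorem divisorWeight_mul {m n u v : ℕ} (h : m.Coprime n) (hu : u ∣ m) (hv : v ∣ n) :
    divisorWeight (m * n) (u * v) = divisorWeight m u * divisorWeight n v := by
  have hμ : μ (m * n / (u * v)) = μ (m / u) * μ (n / v) := by
    rw [← Nat.div_mul_div_comm hu hv]
    exact isMultiplicative_moebius.map_mul_of_coprime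
      ((h.coprime_dvd_left (Nat.div_dvd_of_dvd hu)).coprime_dvd_right (Nat.div_dvd_of_dvd hv))
  have hφ : φ (u * v) = φ u * φ v :=
    Nat.totient_mul ((h.coprime_dvd_left hu).coprime_dvd_right hv)
  simp only [divisorWeight, hμ, hφ]
  push_cast
  ring

theorem divisorWeight_one_right (n : ℕ) : divisorWeight n 1 = μ n := by
  simp [divisorWeight]

theorem natCast_totient_prime {p : ℕ} (hp : p.Prime) : (φ p : ℚ) = p - 1 := by
  rw [Nat.totient_prime hp, Nat.cast_sub hp.one_le, Nat.cast_one]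

theorem divisorWeight_prime_self {p : ℕ} (hp : p.Prime) : divisorWeight p p = p / (p - 1) := by
  rw [divisorWeight, Nat.div_self hp.pos, moebius_apply_one, natCast_totient_prime hp,
    Int.cast_one, one_mul]

theorem coprimeDivisorSum_comm (m₁ m₂ : ℕ) :
    coprimeDivisorSum m₁ m₂ = coprimeDivisorSum m₂ m₁ := by
  unfold coprimeDivisorSum
  rw [sum_comm]
  exact sum_congr rfl fun _ _ => sum_congr rfl fun _ _ =>
    if_congr Nat.coprime_comm (mul_comm _ _) rfl

theorem isBimultiplicative_coprimeDivisorSum : IsBimultiplicative coprimeDivisorSum := by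
  intro m₁ m₂ n₁ n₂ h
  have h' := h
  simp only [Nat.coprime_mul_iff_left, Nat.coprime_mul_iff_right] at h'
  obtain ⟨⟨h₁₁, h₂₁⟩, h₁₂, h₂₂⟩ := h'
  simp only [coprimeDivisorSum, h₁₁.sum_divisors_mul_eq_sum_sum, h₂₂.sum_divisors_mul_eq_sum_sum,
    sum_mul_sum]
  refine sum_congr rfl fun u₁ hu₁ => sum_congr rfl fun v₁ hv₁ => ?_
  refine sum_congr rfl fun u₂ hu₂ => sum_congr rfl fun v₂ hv₂ => ?_
  rw [Nat.mem_divisors] at hu₁ hv₁ hu₂ hv₂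
  have hcop : (u₁ * v₁).Coprime (u₂ * v₂) ↔ u₁.Coprime u₂ ∧ v₁.Coprime v₂ := by
    have : u₁.Coprime v₂ := (h₁₂.coprime_dvd_left hu₁.1).coprime_dvd_right hv₂.1
    have : v₁.Coprime u₂ := ((h₂₁.coprime_dvd_left hu₂.1).coprime_dvd_right hv₁.1).symm
    simp only [Nat.coprime_mul_iff_left, Nat.coprime_mul_iff_right]
    tauto
  rw [divisorWeight_mul h₁₁ hu₁.1 hv₁.1, divisorWeight_mul h₂₂ hu₂.1 hv₂.1,
    if_congr hcop rfl rfl, ite_and]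
  split_ifs <;> ring

theorem coprimeDivisorSum_prime_pow_eq_zero {p a : ℕ} (hp : p.Prime) (ha : 2 ≤ a) (n : ℕ) :
    coprimeDivisorSum (p ^ a) n = 0 := by
  let g (d : ℕ) : ℚ := ∑ e ∈ n.divisors, if d.Coprime e then d / φ d * divisorWeight n e else 0
  have hg (d : ℕ) (hd : p ∣ d) : g (p * d) = g d := by
    have hp₀ : (p : ℚ) ≠ 0 := by exact_mod_cast hp.ne_zero
    refine sum_congr rfl fun e _ => if_congr ?_ ?_ rfl
    · rw [Nat.coprime_mul_iff_left]
      exact ⟨fun h => h.2, fun h => ⟨h.coprime_dvd_left hd, h⟩⟩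
    · rw [Nat.totient_mul_of_prime_of_dvd hp hd]
      push_cast
      rw [mul_div_mul_left _ _ hp₀]
  calc coprimeDivisorSum (p ^ a) n = ∑ d ∈ (p ^ a).divisors, (μ (p ^ a / d) : ℚ) * g d := by
        refine sum_congr rfl fun d _ => ?_
        rw [mul_sum]
        refine sum_congr rfl fun e _ => ?_
        rw [mul_ite, mul_zero, divisorWeight, mul_assoc]
    _ = 0 := sum_divisors_prime_pow_moebius_div_mul_eq_zero hp ha g hg

theorem totient_mul_coprimeDivisorSum_one_prime {p : ℕ} (hp : p.Prime) :
    (φ p : ℚ) * coprimeDivisorSum 1 p = 1 := by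
  have hp₁ : (p : ℚ) - 1 ≠ 0 := sub_ne_zero.2 (by exact_mod_cast hp.ne_one)
  rw [coprimeDivisorSum, Nat.divisors_one, sum_singleton, hp.divisors, sum_pair hp.ne_one.symm,
    if_pos (Nat.coprime_one_left 1), if_pos (Nat.coprime_one_left p), divisorWeight_one_right,
    divisorWeight_one_right, divisorWeight_prime_self hp, moebius_apply_one,
    moebius_apply_prime hp, natCast_totient_prime hp]
  field_simp
  push_cast
  ring

theorem totient_mul_coprimeDivisorSum_prime_prime {p : ℕ} (hp : p.Prime) :
    (φ p : ℚ) * coprimeDivisorSum p p = -(p + 1) := by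
  have hp₁ : (p : ℚ) - 1 ≠ 0 := sub_ne_zero.2 (by exact_mod_cast hp.ne_one)
  rw [coprimeDivisorSum, hp.divisors, sum_pair hp.ne_one.symm, sum_pair hp.ne_one.symm,
    sum_pair hp.ne_one.symm, if_pos (Nat.coprime_one_left 1), if_pos (Nat.coprime_one_left p),
    if_pos (Nat.coprime_one_right p), if_neg (Nat.coprime_self p |>.not.2 hp.ne_one),
    divisorWeight_one_right, divisorWeight_prime_self hp, moebius_apply_prime hp,
    natCast_totient_prime hp]
  field_simp
  push_cast
  ring

noncomputable def signedPsi (n : ℕ) : ℚ :=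
  (-1) ^ #n.primeFactors * (n * ∏ p ∈ n.primeFactors, (1 + 1 / (p : ℚ)))

theorem signedPsi_prime {p : ℕ} (hp : p.Prime) : signedPsi p = -(p + 1) := by
  have hp₀ : (p : ℚ) ≠ 0 := by exact_mod_cast hp.ne_zero
  rw [signedPsi, hp.primeFactors, card_singleton, prod_singleton]
  field_simp

theorem signedPsi_mul {m n : ℕ} (h : m.Coprime n) :
    signedPsi (m * n) = signedPsi m * signedPsi n := by
  rw [signedPsi, h.primeFactors_mul, card_union_of_disjoint h.disjoint_primeFactors,
    prod_union h.disjoint_primeFactors, signedPsi, signedPsi]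
  push_cast
  ring

theorem isBimultiplicative_totient_lcm_mul_coprimeDivisorSum :
    IsBimultiplicative fun m₁ m₂ => (φ (m₁.lcm m₂) : ℚ) * coprimeDivisorSum m₁ m₂ := by
  refine IsBimultiplicative.mul (fun m₁ m₂ n₁ n₂ h => ?_) isBimultiplicative_coprimeDivisorSum
  rw [h.lcm_mul_mul, Nat.totient_mul, Nat.cast_mul]
  exact (h.coprime_dvd_left (Nat.lcm_dvd_mul _ _)).coprime_dvd_right (Nat.lcm_dvd_mul _ _)

theorem isBimultiplicative_ite_squarefree_signedPsi_gcd :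
    IsBimultiplicative fun m₁ m₂ =>
      if Squarefree m₁ ∧ Squarefree m₂ then signedPsi (m₁.gcd m₂) else 0 := by
  intro m₁ m₂ n₁ n₂ h
  have h₁ : m₁.Coprime n₁ :=
    (h.coprime_dvd_left (Nat.dvd_mul_right _ _)).coprime_dvd_right (Nat.dvd_mul_right _ _)
  have h₂ : m₂.Coprime n₂ :=
    (h.coprime_dvd_left (Nat.dvd_mul_left _ _)).coprime_dvd_right (Nat.dvd_mul_left _ _)
  have hg : (m₁.gcd m₂).Coprime (n₁.gcd n₂) :=
    (h₁.coprime_dvd_left (Nat.gcd_dvd_left _ _)).coprime_dvd_right (Nat.gcd_dvd_left _ _)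
  simp only [Nat.squarefree_mul h₁, Nat.squarefree_mul h₂, h.gcd_mul_mul, signedPsi_mul hg,
    ite_zero_mul_ite_zero, and_and_and_comm]

theorem totient_lcm_mul_coprimeDivisorSum_prime_pow {p : ℕ} (hp : p.Prime) (a b : ℕ) :
    (φ ((p ^ a).lcm (p ^ b)) : ℚ) * coprimeDivisorSum (p ^ a) (p ^ b) =
      if Squarefree (p ^ a) ∧ Squarefree (p ^ b) then signedPsi ((p ^ a).gcd (p ^ b)) else 0 := by
  wlog hab : a ≤ b generalizing a b
  · rw [Nat.lcm_comm, coprimeDivisorSum_comm, Nat.gcd_comm, if_congr and_comm rfl rfl]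
    exact this b a (le_of_not_ge hab)
  rw [Nat.lcm_eq_right (pow_dvd_pow p hab), Nat.gcd_eq_left (pow_dvd_pow p hab)]
  rcases lt_or_ge b 2 with hb | hb
  · interval_cases b <;> interval_cases a
    · simp [coprimeDivisorSum, divisorWeight, signedPsi]
    · simp [totient_mul_coprimeDivisorSum_one_prime hp, hp.squarefree, signedPsi]
    · simp [totient_mul_coprimeDivisorSum_prime_prime hp, hp.squarefree, signedPsi_prime hp]
  · have : ¬ Squarefree (p ^ b) := by
      rw [Nat.squarefree_pow_iff hp.ne_one (by omega)]
      omega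
    rw [coprimeDivisorSum_comm, coprimeDivisorSum_prime_pow_eq_zero hp hb, mul_zero,
      if_neg (fun h => this h.2)]

theorem eval_R_a1_a2 (m₁ m₂ : ℕ) (hm₁ : 0 < m₁) (hm₂ : 0 < m₂)
    (a₁ a₂ : ℤ) (ha₁ : Int.gcd a₁ m₁ = 1) (ha₂ : Int.gcd a₂ m₂ = 1)
    (ha : |a₁ - a₂| = 1) :
    ∑ k ∈ (Icc 1 (Nat.lcm m₁ m₂)).filter (fun k => Nat.gcd k (Nat.lcm m₁ m₂) = 1),
      (ramanujanSum m₁ ((k : ℤ) - a₁) : ℚ) * (ramanujanSum m₂ ((k : ℤ) - a₂) : ℚ) =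
    if Squarefree m₁ ∧ Squarefree m₂ then
      (-1 : ℚ) ^ (Nat.gcd m₁ m₂).primeFactors.card *
        ((Nat.gcd m₁ m₂ : ℚ) * ∏ p ∈ (Nat.gcd m₁ m₂).primeFactors, (1 + 1 / (p : ℚ)))
    else 0 := by
  rw [sum_coprime_ramanujanSum_mul_ramanujanSum hm₁.ne' hm₂.ne'
    (Int.isCoprime_iff_gcd_eq_one.2 ha₁).symm (Int.isCoprime_iff_gcd_eq_one.2 ha₂).symm
    (Int.isUnit_iff_abs_eq.2 ha)]
  exact isBimultiplicative_totient_lcm_mul_coprimeDivisorSum.eq_of_prime_pow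
    isBimultiplicative_ite_squarefree_signedPsi_gcd
    (fun _ _ _ hp => totient_lcm_mul_coprimeDivisorSum_prime_pow hp _ _) hm₁.ne' hm₂.ne'
end

section
/- Let p be a prime and e_1,…,e_r ≥ 1 with e := e_1 = … = e_s > e_{s+1} ≥ … ≥ e_r ≥ 1 (1 ≤ s ≤ r). Define R(p^{e_1},…,p^{e_r}) = Σ_{1 ≤ k ≤ p^e, gcd(k,p)=1} c_{p^{e_1}}(k−1)···c_{p^{e_r}}(k−1). Then R(p^{e_1},…,p^{e_r}) = p^{v+e}(p−1)^{r−s+1} h_s(p) if e > 1, where v = (Σ_j e_j) − r − e + 1 and h_s(x) = ((x−1)^{s−1} + (−1)^s)/x; and R(p,…,p) = (p−1)^r + (−1)^r (p−2) if e = 1. -/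
open Finset ArithmeticFunction

lemma pow_mul_moebius_prime_pow_div {p a i : ℕ} (hp : p.Prime) (ha : a ≠ 0) (hi : i ≤ a) :
    ((p ^ i : ℕ) : ℤ) * moebius (p ^ a / p ^ i) =
      (if i = a then (p : ℤ) ^ a else 0) - (if i = a - 1 then (p : ℤ) ^ (a - 1) else 0) := by
  rw [Nat.pow_div hi hp.pos, Nat.cast_pow]
  obtain rfl | hia := eq_or_ne i a
  · simp [Nat.sub_one_lt ha |>.ne']
  · rw [moebius_apply_prime_pow hp (by omega)]
    split_ifs <;> first | omega | simp_all

lemma ramanujanSum_prime_pow {p a : ℕ} (hp : p.Prime) (ha : a ≠ 0) (m : ℤ) :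
    ramanujanSum (p ^ a) m =
      if (p : ℤ) ^ a ∣ m then (p : ℤ) ^ (a - 1) * (p - 1)
      else if (p : ℤ) ^ (a - 1) ∣ m then -(p : ℤ) ^ (a - 1) else 0 := by
  obtain ⟨c, hca, hc⟩ := (Nat.dvd_prime_pow hp).1 (Int.gcd_dvd_natAbs_right m ((p ^ a : ℕ) : ℤ))
  have hdvd : ∀ b ≤ a, (p : ℤ) ^ b ∣ m ↔ b ≤ c := by
    intro b hb
    rw [← Nat.pow_dvd_pow_iff_le_right hp.one_lt, ← hc]
    constructor
    · intro h
      exact Int.dvd_gcd (by exact_mod_cast h) (by exact_mod_cast pow_dvd_pow p hb)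
    · intro h
      exact_mod_cast (Int.natCast_dvd_natCast.2 h).trans (Int.gcd_dvd_left _ _)
  unfold ramanujanSum
  rw [hc, Nat.sum_divisors_prime_pow hp,
    sum_congr rfl fun i hi => pow_mul_moebius_prime_pow_div hp ha (by grind),
    sum_sub_distrib, sum_ite_eq', sum_ite_eq']
  have hpow : (p : ℤ) ^ a = (p : ℤ) ^ (a - 1) * p := by
    rw [← pow_succ, Nat.sub_add_cancel (by omega)]
  simp only [mem_range, hdvd a le_rfl, hdvd (a - 1) (Nat.sub_le a 1)]
  split_ifs <;> first | omega | linear_combination hpow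

section

variable {p a : ℕ} (hp : p.Prime) (ha : a ≠ 0) {m : ℤ}
include hp ha

lemma ramanujanSum_prime_pow_of_dvd (h : (p : ℤ) ^ a ∣ m) :
    ramanujanSum (p ^ a) m = (p : ℤ) ^ (a - 1) * (p - 1) := by
  rw [ramanujanSum_prime_pow hp ha, if_pos h]

lemma ramanujanSum_prime_pow_of_dvd_of_not_dvd (h₁ : (p : ℤ) ^ (a - 1) ∣ m)
    (h₂ : ¬ (p : ℤ) ^ a ∣ m) : ramanujanSum (p ^ a) m = -(p : ℤ) ^ (a - 1) := by
  rw [ramanujanSum_prime_pow hp ha, if_neg h₂, if_pos h₁]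

lemma ramanujanSum_prime_pow_of_not_dvd (h : ¬ (p : ℤ) ^ (a - 1) ∣ m) :
    ramanujanSum (p ^ a) m = 0 := by
  rw [ramanujanSum_prime_pow hp ha, if_neg h,
    if_neg fun h' => h ((pow_dvd_pow _ (Nat.sub_le a 1)).trans h')]

end

lemma sum_filter_coprime_Icc_mul_eq_sum_range {M : Type*} [AddCommMonoid M] {p q : ℕ}
    (hq : 0 < q) (hpq : p ∣ q) (g : ℤ → M) (hg : ∀ m : ℤ, ¬ (q : ℤ) ∣ m → g m = 0) :
    ∑ k ∈ (Icc 1 (p * q)).filter (fun k => Nat.gcd k p = 1), g ((k : ℤ) - 1) =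
      ∑ j ∈ range p, g (j * q) := by
  have hinj : Set.InjOn (fun j => 1 + j * q) (range p) := fun a _ b _ h => by
    simpa [hq.ne'] using h
  have hsub : (range p).image (fun j => 1 + j * q) ⊆
      (Icc 1 (p * q)).filter (fun k => Nat.gcd k p = 1) := by
    intro k hk
    obtain ⟨j, hj, rfl⟩ := mem_image.1 hk
    obtain ⟨t, rfl⟩ := hpq
    simp only [mem_filter, mem_Icc, mem_range] at hj ⊢
    refine ⟨⟨by omega, by nlinarith⟩, ?_⟩
    rw [show j * (p * t) = j * t * p by ring]
    exact (Nat.coprime_add_mul_right_left 1 p _).2 (Nat.coprime_one_left p)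
  have hvanish : ∀ k ∈ (Icc 1 (p * q)).filter (fun k => Nat.gcd k p = 1),
      k ∉ (range p).image (fun j => 1 + j * q) → g ((k : ℤ) - 1) = 0 := by
    intro k hk hk'
    refine hg _ fun ⟨j, hj⟩ => hk' ?_
    simp only [mem_filter, mem_Icc] at hk
    have hk0 : 0 ≤ (k : ℤ) - 1 := by omega
    have hk1 : (k : ℤ) - 1 < q * p := by push_cast [mul_comm] at hk ⊢; omega
    obtain ⟨n, rfl⟩ := Int.eq_ofNat_of_zero_le (a := j) (by nlinarith)
    refine mem_image.2 ⟨n, mem_range.2 (by nlinarith), ?_⟩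
    zify [hk.1.1]
    linarith
  rw [← sum_subset hsub hvanish, sum_image hinj]
  push_cast
  simp

lemma Fin.prod_ite_val_lt {M : Type*} [CommMonoid M] {r s : ℕ} (hsr : s ≤ r) (a b : M) :
    ∏ i : Fin r, (if (i : ℕ) < s then a else b) = a ^ s * b ^ (r - s) := by
  rw [Fin.prod_univ_eq_prod_range (fun i => if i < s then a else b),
    ← prod_range_mul_prod_Ico _ hsr,
    prod_congr rfl fun i hi => if_pos (mem_range.1 hi),
    prod_congr rfl fun i hi => if_neg (mem_Ico.1 hi).1.not_gt,
    Finset.prod_const, Finset.prod_const, card_range, Nat.card_Ico]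

lemma sum_prod_ramanujanSum_prime_pow {p r s E : ℕ} (hp : p.Prime) (hs1 : 1 ≤ s) (hsr : s ≤ r)
    (hE : 1 < E) (e : Fin r → ℕ) (he1 : ∀ i, 1 ≤ e i)
    (heE : ∀ i : Fin r, (i : ℕ) < s → e i = E) (heL : ∀ i : Fin r, s ≤ (i : ℕ) → e i < E) :
    ∑ k ∈ (Icc 1 (p ^ E)).filter (fun k => Nat.gcd k p = 1),
        ∏ i, ramanujanSum (p ^ e i) ((k : ℤ) - 1) =
      (∏ i, (p : ℤ) ^ (e i - 1)) * ((p : ℤ) - 1) ^ (r - s + 1) *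
        (((p : ℤ) - 1) ^ (s - 1) + (-1) ^ s) := by
  have he0 : ∀ i, e i ≠ 0 := fun i => Nat.one_le_iff_ne_zero.1 (he1 i)
  have hvanish : ∀ m : ℤ, ¬ ((p ^ (E - 1) : ℕ) : ℤ) ∣ m →
      ∏ i, ramanujanSum (p ^ e i) m = 0 := fun m hm =>
    prod_eq_zero (mem_univ ⟨0, by omega⟩) <| by
      rw [heE ⟨0, by omega⟩ hs1]
      exact ramanujanSum_prime_pow_of_not_dvd hp (by omega) (by exact_mod_cast hm)
  have hterm_zero :
      ∏ i, ramanujanSum (p ^ e i) 0 = (∏ i, (p : ℤ) ^ (e i - 1)) * ((p : ℤ) - 1) ^ r := by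
    rw [prod_congr rfl fun i _ => ramanujanSum_prime_pow_of_dvd hp (he0 i) (dvd_zero _),
      prod_mul_distrib, prod_const, card_univ, Fintype.card_fin]
  have hterm_unit : ∀ j : ℕ, 0 < j → j < p →
      ∏ i, ramanujanSum (p ^ e i) (j * (p ^ (E - 1) : ℕ)) =
        (∏ i, (p : ℤ) ^ (e i - 1)) * ((-1) ^ s * ((p : ℤ) - 1) ^ (r - s)) := by
    intro j hj0 hjp
    rw [← Fin.prod_ite_val_lt hsr, ← prod_mul_distrib]
    refine prod_congr rfl fun i _ => ?_
    push_cast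
    split_ifs with hi
    · have hndvd : ¬ (p : ℤ) ^ E ∣ j * (p : ℤ) ^ (E - 1) := by
        rw [← Nat.sub_add_cancel hE.le, pow_succ, mul_comm (j : ℤ), Nat.add_sub_cancel,
          mul_dvd_mul_iff_left (pow_ne_zero _ (by exact_mod_cast hp.ne_zero)),
          Int.natCast_dvd_natCast]
        exact fun h => (Nat.le_of_dvd hj0 h).not_gt hjp
      rw [heE i hi, ramanujanSum_prime_pow_of_dvd_of_not_dvd hp (by omega) (dvd_mul_left _ _)
        hndvd, mul_neg_one]
    · have hle : e i ≤ E - 1 := Nat.le_sub_one_of_lt (heL i (by omega))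
      rw [ramanujanSum_prime_pow_of_dvd hp (he0 i) (dvd_mul_of_dvd_right (pow_dvd_pow _ hle) _)]
  rw [show p ^ E = p * p ^ (E - 1) by rw [← pow_succ', Nat.sub_add_cancel hE.le],
    sum_filter_coprime_Icc_mul_eq_sum_range (pow_pos hp.pos _) (dvd_pow_self p (by omega)) _
      hvanish]
  obtain ⟨n, rfl⟩ : ∃ n, p = n + 1 := ⟨p - 1, by have := hp.pos; omega⟩
  rw [sum_range_succ', sum_congr rfl fun j hj => hterm_unit (j + 1) j.succ_pos (by simpa using hj),
    sum_const, card_range, nsmul_eq_mul, Nat.cast_zero, zero_mul, hterm_zero]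
  obtain ⟨u, rfl⟩ : ∃ u, r = s + u := ⟨r - s, by omega⟩
  obtain ⟨t, rfl⟩ : ∃ t, s = t + 1 := ⟨s - 1, by omega⟩
  simp only [Nat.add_sub_cancel_left, Nat.add_sub_cancel]
  push_cast
  ring

lemma sum_pow_ramanujanSum_prime {p : ℕ} (hp : p.Prime) (r : ℕ) :
    ∑ k ∈ (Icc 1 p).filter (fun k => Nat.gcd k p = 1), ramanujanSum p ((k : ℤ) - 1) ^ r =
      ((p : ℤ) - 1) ^ r + (-1) ^ r * ((p : ℤ) - 2) := by
  have hterm_units : (Icc 1 p).filter (fun k => Nat.gcd k p = 1) = Ico 1 p := by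
    ext k
    simp only [mem_filter, mem_Icc, mem_Ico]
    constructor
    · rintro ⟨⟨hk1, hkp⟩, hcop⟩
      refine ⟨hk1, hkp.lt_of_ne ?_⟩
      rintro rfl
      exact hp.one_lt.ne' (Nat.gcd_self k ▸ hcop)
    · rintro ⟨hk1, hkp⟩
      exact ⟨⟨hk1, hkp.le⟩, Nat.coprime_comm.1 <|
        hp.coprime_iff_not_dvd.2 fun h => (Nat.le_of_dvd hk1 h).not_gt hkp⟩
  have hc : ∀ m : ℤ, 0 < m → m < p → ramanujanSum p m = -1 := fun m hm0 hmp => by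
    rw [← pow_one p, ramanujanSum_prime_pow_of_dvd_of_not_dvd hp one_ne_zero (by simp)
      fun h => (Int.le_of_dvd hm0 (by simpa using h)).not_gt hmp, Nat.sub_self, pow_zero]
  obtain ⟨n, rfl⟩ : ∃ n, p = n + 2 := ⟨p - 2, by have := hp.two_le; omega⟩
  rw [hterm_units, sum_Ico_eq_sum_range, show n + 2 - 1 = n + 1 by omega, sum_range_succ',
    sum_congr rfl fun k hk => by rw [hc _ (by omega) (by simp only [mem_range] at hk; omega)]]
  rw [← pow_one (n + 2), ramanujanSum_prime_pow_of_dvd hp one_ne_zero (by simp)]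
  simp only [sum_const, card_range, nsmul_eq_mul, Nat.cast_add, Nat.cast_ofNat, tsub_self,
    pow_zero, one_mul, pow_one, add_sub_cancel_right]
  ring

theorem eval_R_prime_powers_general (p : ℕ) (hp : p.Prime) (r s E : ℕ)
    (hs1 : 1 ≤ s) (hsr : s ≤ r) (e : Fin r → ℕ)
    (he1 : ∀ i, 1 ≤ e i)
    (heE : ∀ i : Fin r, (i : ℕ) < s → e i = E)
    (heL : ∀ i : Fin r, s ≤ (i : ℕ) → e i < E) :
    (1 < E →
      (((∑ k ∈ (Icc 1 (p ^ E)).filter (fun k => Nat.gcd k p = 1),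
          ∏ i, ramanujanSum (p ^ e i) ((k : ℤ) - 1)) : ℤ) : ℚ) =
        (p : ℚ) ^ (((∑ i, (e i : ℤ)) - r - E + 1) + E) *
          ((p : ℚ) - 1) ^ (r - s + 1) *
          ((((p : ℚ) - 1) ^ (s - 1) + (-1) ^ s) / (p : ℚ))) ∧
    (E = 1 →
      (∑ k ∈ (Icc 1 (p ^ E)).filter (fun k => Nat.gcd k p = 1),
          ∏ i, ramanujanSum (p ^ e i) ((k : ℤ) - 1)) =
        ((p : ℤ) - 1) ^ r + (-1) ^ r * ((p : ℤ) - 2)) := by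
  refine ⟨fun hE => ?_, fun hE => ?_⟩
  · have hexp : (∑ i, (e i : ℤ)) - r - E + 1 + E = ((∑ i, (e i - 1) : ℕ) : ℤ) + 1 := by
      push_cast [Nat.cast_sub (he1 _), sum_sub_distrib]
      simp only [sum_const, card_univ, Fintype.card_fin, nsmul_eq_mul, mul_one]
      ring
    have hp0 : (p : ℚ) ≠ 0 := by exact_mod_cast hp.ne_zero
    rw [sum_prod_ramanujanSum_prime_pow hp hs1 hsr hE e he1 heE heL, prod_pow_eq_pow_sum, hexp,
      zpow_add_one₀ hp0, zpow_natCast]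
    push_cast
    field_simp
  · subst hE
    have he : ∀ i, e i = 1 := fun i =>
      if hi : (i : ℕ) < s then heE i hi else absurd (heL i (by omega)) (by have := he1 i; omega)
    simp only [he, pow_one, prod_const, card_univ, Fintype.card_fin]
    exact sum_pow_ramanujanSum_prime hp r

theorem eval_R_prime_powers (p : ℕ) (hp : p.Prime) (r s E : ℕ)
    (hs1 : 1 ≤ s) (hsr : s ≤ r) (e : Fin r → ℕ)
    (he1 : ∀ i, 1 ≤ e i)
    (heE : ∀ i : Fin r, (i : ℕ) < s → e i = E)
    (heL : ∀ i : Fin r, s ≤ (i : ℕ) → e i < E)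
    (hanti : ∀ i j : Fin r, i ≤ j → e j ≤ e i) :
    (1 < E →
      (((∑ k ∈ (Icc 1 (p ^ E)).filter (fun k => Nat.gcd k p = 1),
          ∏ i, ramanujanSum (p ^ e i) ((k : ℤ) - 1)) : ℤ) : ℚ) =
        (p : ℚ) ^ (((∑ i, (e i : ℤ)) - r - E + 1) + E) *
          ((p : ℚ) - 1) ^ (r - s + 1) *
          ((((p : ℚ) - 1) ^ (s - 1) + (-1) ^ s) / (p : ℚ))) ∧
    (E = 1 →
      (∑ k ∈ (Icc 1 (p ^ E)).filter (fun k => Nat.gcd k p = 1),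
          ∏ i, ramanujanSum (p ^ e i) ((k : ℤ) - 1)) =
        ((p : ℤ) - 1) ^ r + (-1) ^ r * ((p : ℤ) - 2)) :=
  eval_R_prime_powers_general p hp r s E hs1 hsr e he1 heE heL
end

section
/- For all positive integers m_1,…,m_r, the value R(m_1,…,m_r) = Σ_{1 ≤ k ≤ m, gcd(k,m)=1} c_{m_1}(k−1)···c_{m_r}(k−1) (with m = lcm(m_1,…,m_r)) is a nonnegative integer. -/
open Finset ArithmeticFunction

/-!
Fix a primitive `M`-th root of unity `ζ`, where `M` is a common multiple of the `mᵢ`. Möbius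
inversion gives `c_n(a) = ∑_{x ∈ (ℤ/n)ˣ} ζ^{a x M/n}` for `n ∣ M`, so
`f(a) = ∏ᵢ c_{mᵢ}(a) = ∑ₓ ζ^{a s(x)}` is a sum of characters of `ℤ/M` with nonnegative
multiplicities. Since `f(u a) = f(a)` for units `u` mod `M`, `φ(M) R = ∑_{u, k} f(u (k - 1))` over
pairs of units, and for a single character this double sum is `c_M(-s) c_M(s) = c_M(s)²`. Hence
`φ(M) R = ∑ₓ c_M(s(x))² ≥ 0`.
-/

open scoped ArithmeticFunction.Moebius

lemma sum_Icc_one_eq_sum_range {G : Type*} [AddCancelCommMonoid G] {g : ℕ → G} {n : ℕ}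
    (h : g n = g 0) : ∑ k ∈ Icc 1 n, g k = ∑ k ∈ range n, g k := by
  have hshift : ∑ k ∈ Icc 1 n, g k = ∑ k ∈ range n, g (k + 1) := by
    rw [range_eq_Ico, sum_Ico_add', ← Finset.Ico_add_one_right_eq_Icc]
  have h₁ := sum_range_succ' g n
  rw [sum_range_succ_comm, h] at h₁
  rw [hshift]
  exact add_right_cancel (h₁.symm.trans (add_comm _ _))

lemma Icc_filter_dvd_eq_map {d n : ℕ} (hd : 0 < d) :
    {x ∈ Icc 1 n | d ∣ x} = (Icc 1 (n / d)).map ⟨(d * ·), mul_right_injective₀ hd.ne'⟩ := by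
  ext x
  simp only [mem_filter, mem_Icc, mem_map, Function.Embedding.coeFn_mk]
  constructor
  · rintro ⟨⟨hx1, hxn⟩, y, rfl⟩
    refine ⟨y, ⟨Nat.pos_of_ne_zero (by rintro rfl; simp at hx1), ?_⟩, rfl⟩
    exact (Nat.le_div_iff_mul_le hd).2 (by linarith)
  · rintro ⟨y, ⟨hy1, hyn⟩, rfl⟩
    refine ⟨⟨Nat.one_le_iff_ne_zero.2 (by positivity), ?_⟩, dvd_mul_right d y⟩
    rw [Nat.le_div_iff_mul_le hd] at hyn
    linarith

lemma zpow_sum₀ {G₀ ι : Type*} [CommGroupWithZero G₀] {a : G₀} (ha : a ≠ 0) (s : Finset ι)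
    (f : ι → ℤ) : a ^ (∑ i ∈ s, f i) = ∏ i ∈ s, a ^ f i := by
  induction s using Finset.cons_induction with
  | empty => simp
  | cons i s _ ih => rw [sum_cons, prod_cons, zpow_add₀ ha, ih]

lemma sum_moebius_divisors_eq_ite {R : Type*} [Ring R] (N : ℕ) :
    ∑ d ∈ N.divisors, (μ d : R) = if N = 1 then 1 else 0 := by
  simp_rw [← intCoe_apply, ← coe_mul_zeta_apply, coe_moebius_mul_coe_zeta, one_apply]

lemma sum_moebius_filter_dvd_eq_ite {R : Type*} [Ring R] {n : ℕ} (hn : n ≠ 0) (x : ℕ) :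
    ∑ d ∈ n.divisors with d ∣ x, (μ d : R) = if Nat.gcd x n = 1 then 1 else 0 := by
  have : {d ∈ n.divisors | d ∣ x} = {d ∈ n.divisors | d ∣ Nat.gcd x n} := by
    refine filter_congr fun d hd => ?_
    rw [Nat.dvd_gcd_iff, and_iff_left (Nat.dvd_of_mem_divisors hd)]
  rw [this, Nat.divisors_filter_dvd_of_dvd hn (Nat.gcd_dvd_right x n)]
  exact sum_moebius_divisors_eq_ite _

lemma IsPrimitiveRoot.sum_Icc_zpow_mul_eq_ite {K : Type*} [Field K] {ζ : K} {n : ℕ}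
    (hζ : IsPrimitiveRoot ζ n) (c : ℤ) :
    ∑ y ∈ Icc 1 n, ζ ^ (c * y) = if (n : ℤ) ∣ c then (n : K) else 0 := by
  have hpow : ∀ y : ℕ, ζ ^ (c * y) = (ζ ^ c) ^ y := fun y => by
    rw [zpow_mul, zpow_natCast]
  simp_rw [hpow]
  have hperiod : (ζ ^ c) ^ n = (ζ ^ c) ^ 0 := by
    rw [← zpow_natCast, ← zpow_mul, mul_comm, zpow_mul, zpow_natCast, hζ.pow_eq_one, one_zpow,
      pow_zero]
  rw [sum_Icc_one_eq_sum_range hperiod]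
  split_ifs with hc
  · rw [(hζ.zpow_eq_one_iff_dvd c).2 hc]
    simp
  · rw [geom_sum_eq (mt (hζ.zpow_eq_one_iff_dvd c).1 hc), hperiod, pow_zero, sub_self, zero_div]

lemma ramanujanSum_mul_of_gcd_eq_one {n : ℕ} {u : ℤ} (hu : Int.gcd u n = 1) (a : ℤ) :
    ramanujanSum n (u * a) = ramanujanSum n a := by
  rw [ramanujanSum, ramanujanSum, Int.gcd_mul_right_left_of_gcd_eq_one hu]

lemma ramanujanSum_neg (n : ℕ) (a : ℤ) : ramanujanSum n (-a) = ramanujanSum n a := by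
  rw [ramanujanSum, ramanujanSum, Int.neg_gcd]

lemma ramanujanSum_eq_sum_filter_dvd {n : ℕ} (hn : n ≠ 0) (a : ℤ) :
    ramanujanSum n a = ∑ e ∈ n.divisors with ((e : ℕ) : ℤ) ∣ a, (e : ℤ) * μ (n / e) := by
  have hgcd : Int.gcd a n ∣ n := by
    simpa using Int.gcd_dvd_natAbs_right a n
  rw [ramanujanSum, ← Nat.divisors_filter_dvd_of_dvd hn hgcd]
  refine sum_congr (filter_congr fun e he => ?_) fun _ _ => rfl
  rw [Int.natCast_dvd, Int.gcd, Nat.dvd_gcd_iff, Int.natAbs_natCast,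
    and_iff_left (Nat.dvd_of_mem_divisors he)]

lemma IsPrimitiveRoot.ramanujanSum_eq_sum_zpow {K : Type*} [Field K] {ζ : K} {n : ℕ}
    (hζ : IsPrimitiveRoot ζ n) (hn : n ≠ 0) (a : ℤ) :
    (ramanujanSum n a : K) = ∑ x ∈ Icc 1 n with Nat.gcd x n = 1, ζ ^ (a * x) := by
  have hinner : ∀ d ∈ n.divisors, ∑ x ∈ Icc 1 n with d ∣ x, ζ ^ (a * x) =
      if ((n / d : ℕ) : ℤ) ∣ a then ((n / d : ℕ) : K) else 0 := by
    intro d hd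
    have hd0 := Nat.pos_of_mem_divisors hd
    rw [sum_filter, ← sum_filter, Icc_filter_dvd_eq_map hd0, sum_map,
      ← (hζ.pow_of_dvd hd0.ne' (Nat.dvd_of_mem_divisors hd)).sum_Icc_zpow_mul_eq_ite]
    refine sum_congr rfl fun y _ => ?_
    rw [Function.Embedding.coeFn_mk, ← zpow_natCast ζ d, ← zpow_mul]
    push_cast
    ring_nf
  calc (ramanujanSum n a : K)
      = ∑ e ∈ n.divisors, (μ (n / e) : K) * if ((e : ℕ) : ℤ) ∣ a then (e : K) else 0 := by
        rw [ramanujanSum_eq_sum_filter_dvd hn, sum_filter]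
        push_cast
        refine sum_congr rfl fun e _ => ?_
        split_ifs <;> simp [mul_comm]
    _ = ∑ d ∈ n.divisors, (μ d : K) * ∑ x ∈ Icc 1 n with d ∣ x, ζ ^ (a * x) := by
        rw [← Nat.sum_div_divisors]
        refine sum_congr rfl fun d hd => ?_
        rw [Nat.div_div_self (Nat.dvd_of_mem_divisors hd) hn, hinner d hd]
    _ = ∑ x ∈ Icc 1 n, (∑ d ∈ n.divisors with d ∣ x, (μ d : K)) * ζ ^ (a * x) := by
        simp_rw [mul_sum, sum_filter, sum_mul, ite_mul, zero_mul]
        exact sum_comm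
    _ = ∑ x ∈ Icc 1 n with Nat.gcd x n = 1, ζ ^ (a * x) := by
        rw [sum_filter]
        refine sum_congr rfl fun x _ => ?_
        rw [sum_moebius_filter_dvd_eq_ite hn, ite_mul, one_mul, zero_mul]

lemma IsPrimitiveRoot.prod_ramanujanSum_eq_sum_zpow {K ι : Type*} [Field K] [Fintype ι]
    [DecidableEq ι] {ζ : K} {M : ℕ} (hζ : IsPrimitiveRoot ζ M) (hM : M ≠ 0) {m : ι → ℕ}
    (hm : ∀ i, m i ∣ M) (a : ℤ) :
    ∏ i, (ramanujanSum (m i) a : K) =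
      ∑ x ∈ Fintype.piFinset fun i => {y ∈ Icc 1 (m i) | Nat.gcd y (m i) = 1},
        ζ ^ (a * ∑ i, ((M / m i * x i : ℕ) : ℤ)) := by
  have hfactor : ∀ i, (ramanujanSum (m i) a : K) =
      ∑ y ∈ Icc 1 (m i) with Nat.gcd y (m i) = 1, ζ ^ (a * ((M / m i * y : ℕ) : ℤ)) := by
    intro i
    have hmi : m i ≠ 0 := ne_zero_of_dvd_ne_zero hM (hm i)
    have hq : M / m i ≠ 0 := (Nat.div_ne_zero_iff_of_dvd (hm i)).2 ⟨hM, hmi⟩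
    have hroot := hζ.pow_of_dvd hq (Nat.div_dvd_of_dvd (hm i))
    rw [Nat.div_div_self (hm i) hM] at hroot
    rw [hroot.ramanujanSum_eq_sum_zpow hmi]
    refine sum_congr rfl fun y _ => ?_
    rw [← zpow_natCast, ← zpow_mul]
    push_cast
    ring_nf
  simp_rw [hfactor, prod_univ_sum, mul_sum, zpow_sum₀ (hζ.ne_zero hM)]

lemma IsPrimitiveRoot.sum_sum_zpow_eq_ramanujanSum_sq {K : Type*} [Field K] {ζ : K} {n : ℕ}
    (hζ : IsPrimitiveRoot ζ n) (hn : n ≠ 0) (s : ℤ) :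
    ∑ u ∈ Icc 1 n with Nat.gcd u n = 1, ∑ k ∈ Icc 1 n with Nat.gcd k n = 1,
      ζ ^ ((u : ℤ) * ((k : ℤ) - 1) * s) = (ramanujanSum n s : K) ^ 2 := by
  calc _ = ∑ u ∈ Icc 1 n with Nat.gcd u n = 1,
        ζ ^ (-s * u) * ∑ k ∈ Icc 1 n with Nat.gcd k n = 1, ζ ^ (u * s * k) := by
        refine sum_congr rfl fun u _ => ?_
        rw [mul_sum]
        refine sum_congr rfl fun k _ => ?_
        rw [← zpow_add₀ (hζ.ne_zero hn)]
        ring_nf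
    _ = ∑ u ∈ Icc 1 n with Nat.gcd u n = 1, ζ ^ (-s * u) * (ramanujanSum n s : K) := by
        refine sum_congr rfl fun u hu => ?_
        have hu' : Int.gcd u n = 1 := by
          rw [Int.gcd_natCast_natCast]
          exact (mem_filter.1 hu).2
        rw [← hζ.ramanujanSum_eq_sum_zpow hn, ramanujanSum_mul_of_gcd_eq_one hu']
    _ = (ramanujanSum n s : K) ^ 2 := by
        rw [← sum_mul, ← hζ.ramanujanSum_eq_sum_zpow hn, ramanujanSum_neg, sq]

lemma IsPrimitiveRoot.card_mul_sum_prod_ramanujanSum_eq_sum_sq {K ι : Type*} [Field K]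
    [Fintype ι] [DecidableEq ι] {ζ : K} {M : ℕ} (hζ : IsPrimitiveRoot ζ M) (hM : M ≠ 0) {m : ι → ℕ}
    (hm : ∀ i, m i ∣ M) :
    (#{k ∈ Icc 1 M | Nat.gcd k M = 1} : K) *
        ∑ k ∈ Icc 1 M with Nat.gcd k M = 1, ∏ i, (ramanujanSum (m i) ((k : ℤ) - 1) : K) =
      ∑ x ∈ Fintype.piFinset fun i => {y ∈ Icc 1 (m i) | Nat.gcd y (m i) = 1},
        (ramanujanSum M (∑ i, ((M / m i * x i : ℕ) : ℤ)) : K) ^ 2 := by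
  set U := {k ∈ Icc 1 M | Nat.gcd k M = 1}
  have hinv : ∀ u ∈ U, ∀ a : ℤ, ∏ i, (ramanujanSum (m i) a : K) =
      ∏ i, (ramanujanSum (m i) (u * a) : K) := by
    intro u hu a
    refine prod_congr rfl fun i _ => ?_
    have hu' : Int.gcd u (m i) = 1 := by
      rw [Int.gcd_natCast_natCast]
      exact Nat.Coprime.coprime_dvd_right (hm i) (mem_filter.1 hu).2
    rw [ramanujanSum_mul_of_gcd_eq_one hu']
  calc _ = ∑ u ∈ U, ∑ k ∈ U, ∏ i, (ramanujanSum (m i) (u * ((k : ℤ) - 1)) : K) := by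
        rw [← nsmul_eq_mul, ← sum_const]
        exact sum_congr rfl fun u hu => sum_congr rfl fun k _ => hinv u hu _
    _ = ∑ u ∈ U, ∑ k ∈ U,
          ∑ x ∈ Fintype.piFinset fun i => {y ∈ Icc 1 (m i) | Nat.gcd y (m i) = 1},
            ζ ^ ((u : ℤ) * ((k : ℤ) - 1) * ∑ i, ((M / m i * x i : ℕ) : ℤ)) := by
        simp_rw [hζ.prod_ramanujanSum_eq_sum_zpow hM hm]
    _ = _ := by
        simp_rw [sum_comm (s := U) (t := Fintype.piFinset _)]
        exact sum_congr rfl fun x _ => hζ.sum_sum_zpow_eq_ramanujanSum_sq hM _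

theorem sum_prod_ramanujanSum_nonneg {ι : Type*} [Fintype ι] [DecidableEq ι] {M : ℕ}
    (hM : M ≠ 0) {m : ι → ℕ} (hm : ∀ i, m i ∣ M) :
    0 ≤ ∑ k ∈ Icc 1 M with Nat.gcd k M = 1, ∏ i, ramanujanSum (m i) ((k : ℤ) - 1) := by
  have hsq : (#{k ∈ Icc 1 M | Nat.gcd k M = 1} : ℤ) *
        ∑ k ∈ Icc 1 M with Nat.gcd k M = 1, ∏ i, ramanujanSum (m i) ((k : ℤ) - 1) =
      ∑ x ∈ Fintype.piFinset fun i => {y ∈ Icc 1 (m i) | Nat.gcd y (m i) = 1},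
        ramanujanSum M (∑ i, ((M / m i * x i : ℕ) : ℤ)) ^ 2 := by
    exact_mod_cast
      (Complex.isPrimitiveRoot_exp M hM).card_mul_sum_prod_ramanujanSum_eq_sum_sq hM hm
  have hcard : 0 < #{k ∈ Icc 1 M | Nat.gcd k M = 1} := card_pos.2
    ⟨1, mem_filter.2 ⟨mem_Icc.2 ⟨le_rfl, Nat.one_le_iff_ne_zero.2 hM⟩, Nat.gcd_one_left M⟩⟩
  rw [← mul_nonneg_iff_of_pos_left (Nat.cast_pos.2 hcard), hsq]
  exact sum_nonneg fun _ _ => sq_nonneg _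

theorem R_nonneg {r : ℕ} (m : Fin r → ℕ) (hm : ∀ i, 0 < m i) :
    0 ≤ ∑ k ∈ (Icc 1 (Finset.univ.lcm m)).filter
        (fun k => Nat.gcd k (Finset.univ.lcm m) = 1),
      ∏ i, ramanujanSum (m i) ((k : ℤ) - 1) := by
  exact sum_prod_ramanujanSum_nonneg (by simp [Finset.lcm_eq_zero_iff, (hm _).ne'])
    fun i => Finset.dvd_lcm (mem_univ i)
end
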